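/- arXiv:2311.13291 — 2 statements merged into one kernel-verified Lean document; each statement's English description precedes it below -/
import Mathlib

section
/- Let ρ(x) = |x| and let ε be a real-valued random variable with cumulative distribution function F. Then for every t ∈ ℝ, E[|ε + t| − |ε|] = 2∫_0^{−t} F(x) dx + t (where the integral is interpreted with sign, i.e. ∫_0^{−t} = −∫_{−t}^0 when t > 0). -/
/-!
Since `|y| = 2 max y 0 - y`, one has `|a + t| - |a| = 2 (max (-t) a - max 0 a) + t`.
The function `u ↦ max u a` has right derivative `1_{a ≤ u}` everywhere, so
`max d a - max c a = ∫_c^d 1_{a ≤ x} dx`. Taking `a = ε` and integrating over `Ω`,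
Fubini turns the expectation of `1_{ε ≤ x}` into `F x`.
-/

open MeasureTheory Set

lemma hasDerivWithinAt_max_const_Ioi (a x : ℝ) :
    HasDerivWithinAt (fun y => max y a) ((Ici a).indicator 1 x) (Ioi x) x := by
  rcases le_or_gt a x with hax | hxa
  · rw [indicator_of_mem (mem_Ici.2 hax)]
    refine (hasDerivWithinAt_id x _).congr_of_eventuallyEq ?_ (max_eq_left hax)
    filter_upwards [self_mem_nhdsWithin] with y (hy : x < y) using max_eq_left (hax.trans hy.le)
  · rw [indicator_of_notMem (notMem_Ici.2 hxa)]
    refine (hasDerivAt_const x a).hasDerivWithinAt.congr_of_eventuallyEq ?_ (max_eq_right hxa.le)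
    filter_upwards [nhdsWithin_le_nhds (Iio_mem_nhds hxa)] with y hy using max_eq_right hy.le

lemma intervalIntegral_indicator_Ici (a c d : ℝ) :
    ∫ x in c..d, (Ici a).indicator 1 x = max d a - max c a :=
  intervalIntegral.integral_eq_sub_of_hasDeriv_right
    (continuous_id.max continuous_const).continuousOn
    (fun x _ => hasDerivWithinAt_max_const_Ioi a x)
    (intervalIntegrable_iff.2
      ((integrableOn_const measure_Ioc_lt_top.ne).indicator measurableSet_Ici))

section

variable {Ω : Type*} [MeasurableSpace Ω] (μ : Measure Ω) [IsFiniteMeasure μ]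
  {X : Ω → ℝ} (hX : Measurable X) (c d : ℝ)
include hX

lemma integrable_max_sub_max : Integrable (fun ω => max d (X ω) - max c (X ω)) μ :=
  .of_bound (by fun_prop) |d - c| (.of_forall fun ω => abs_max_sub_max_le_abs d c (X ω))

lemma integral_max_sub_max_eq_intervalIntegral :
    ∫ ω, (max d (X ω) - max c (X ω)) ∂μ = ∫ x in c..d, μ.real {ω | X ω ≤ x} := by
  simp_rw [← intervalIntegral_indicator_Ici]
  have : IsFiniteMeasure (volume.restrict (uIoc c d)) := ⟨by simp⟩
  have hS : MeasurableSet {p : ℝ × Ω | X p.2 ≤ p.1} :=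
    measurableSet_le (hX.comp measurable_snd) measurable_fst
  have hint : Integrable (Function.uncurry fun x ω => (Ici (X ω)).indicator (1 : ℝ → ℝ) x)
      ((volume.restrict (uIoc c d)).prod μ) :=
    (integrable_const 1).indicator hS
  rw [← intervalIntegral_integral_swap hint]
  exact intervalIntegral.integral_congr fun x _ => integral_indicator_one (hX measurableSet_Iic)

end

lemma abs_add_sub_abs_eq (a t : ℝ) : |a + t| - |a| = 2 * (max (-t) a - max 0 a) + t := by
  rcases abs_cases (a + t) with ⟨h1, h2⟩ | ⟨h1, h2⟩ <;>
    rcases abs_cases a with ⟨h3, h4⟩ | ⟨h3, h4⟩ <;>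
    simp only [max_def] <;> split_ifs <;> linarith

theorem stmt3_general {Ω : Type*} [MeasurableSpace Ω] (ℙ : Measure Ω) [IsProbabilityMeasure ℙ]
    (ε : Ω → ℝ) (hmeas : Measurable ε)
    (F : ℝ → ℝ) (hF : ∀ x, F x = (ℙ {ω | ε ω ≤ x}).toReal) (t : ℝ) :
    ∫ ω, (|ε ω + t| - |ε ω|) ∂ℙ = 2 * (∫ x in (0 : ℝ)..(-t), F x) + t := by
  simp_rw [abs_add_sub_abs_eq, hF, ← measureReal_def]
  rw [integral_add ((integrable_max_sub_max ℙ hmeas _ _).const_mul 2) (integrable_const t),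
    integral_const_mul, integral_max_sub_max_eq_intervalIntegral ℙ hmeas, integral_const,
    probReal_univ, one_smul]

/-- For the absolute-value loss, the expected increment `E[|ε + t| − |ε|]` equals
`2∫_0^{−t} F(x) dx + t`, where `F` is the CDF of `ε` and the integral is a signed integral. -/
theorem stmt3 {Ω : Type*} [MeasurableSpace Ω] (ℙ : Measure Ω) [IsProbabilityMeasure ℙ]
    (ε : Ω → ℝ) (hmeas : Measurable ε) (hint : Integrable ε ℙ)
    (F : ℝ → ℝ) (hF : ∀ x, F x = (ℙ {ω | ε ω ≤ x}).toReal) (t : ℝ) :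
    ∫ ω, (|ε ω + t| - |ε ω|) ∂ℙ = 2 * (∫ x in (0 : ℝ)..(-t), F x) + t :=
  stmt3_general ℙ ε hmeas F hF t
end

section
/- Suppose β₀ ∈ H^m((0,1)) with m ≥ 1 and the discrete semi-norms ‖β‖_p² = (1/p)Σ_{j=1}^p |β(t_j)|², J²(β) = ‖β‖_p² + ∫_0^1 |β^{(m)}|², and J̃²(β) = ‖Pβ‖_p² + ∫_0^1 |β^{(m)}|², where P is the orthogonal projection (with respect to the discrete inner product (1/p)Σ_j f(t_j)g(t_j)) onto polynomials of degree < m evaluated at {t_j}. Then there exist constants 0 < c₁ ≤ c₂ < ∞, independent of β, such that c₁ J̃(β) ≤ J(β) ≤ c₂ J̃(β) for all β ∈ H^m. -/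
/-!
Both penalties share the integral term, and by Pythagoras for the discrete projection
`‖β‖_p² = ‖Pβ‖_p² + ‖β - Pβ‖_p²`, which gives `J̃ ≤ J`. For the converse, `Pβ` is the best
discrete approximation of `β` by polynomials of degree `< m`, so `‖β - Pβ‖_p²` is at most the
discrete norm of the Taylor remainder of order `m` at `0`. Writing the remainder in integral
form and applying Cauchy–Schwarz on `[0, 1]` bounds its square pointwise by `∫₀¹ |β⁽ᵐ⁾|²`,
hence `J² ≤ 2 J̃²`.
-/

open intervalIntegral

/-- Discrete squared semi-norm `(1/p) Σ_j f(t_j)²` at the discretization points. -/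
noncomputable def discSq (p : ℕ) (t : Fin p → ℝ) (f : ℝ → ℝ) : ℝ :=
  (1 / (p : ℝ)) * ∑ j, f (t j) ^ 2

/-- Sobolev-type penalty `∫_0^1 |f^{(m)}|²`. -/
noncomputable def penInt (m : ℕ) (f : ℝ → ℝ) : ℝ :=
  ∫ u in (0 : ℝ)..1, (iteratedDeriv m f u) ^ 2

open Polynomial Set
open scoped Nat Interval

section Taylor

variable {E : Type*} [NormedAddCommGroup E] [NormedSpace ℝ E]

theorem taylorWithinEval_eq_taylorWithinEval_univ {f : ℝ → E} {n : ℕ} {s : Set ℝ} {x₀ : ℝ}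
    (hf : ContDiff ℝ n f) (hs : UniqueDiffOn ℝ s) (hx₀ : x₀ ∈ s) (x : ℝ) :
    taylorWithinEval f n s x₀ x = taylorWithinEval f n univ x₀ x := by
  simp only [taylor_within_apply, iteratedDerivWithin_univ]
  refine Finset.sum_congr rfl fun k hk => ?_
  have hk : (k : WithTop ℕ∞) ≤ n := by exact_mod_cast Finset.mem_range_succ_iff.mp hk
  rw [iteratedDerivWithin_eq_iteratedDeriv hs (hf.of_le hk).contDiffAt hx₀]

theorem taylor_integral_remainder_univ [CompleteSpace E] {f : ℝ → E} {n : ℕ}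
    (hf : ContDiff ℝ (n + 1 : ℕ) f) (x₀ x : ℝ) :
    f x - taylorWithinEval f n univ x₀ x =
      ∫ t in x₀..x, ((x - t) ^ n / n !) • iteratedDeriv (n + 1) f t := by
  rcases eq_or_ne x₀ x with rfl | hne
  · simp
  have hs : UniqueDiffOn ℝ [[x₀, x]] := uniqueDiffOn_uIcc hne
  rw [← taylorWithinEval_eq_taylorWithinEval_univ (hf.of_le (by norm_cast; omega)) hs
    left_mem_uIcc, taylor_integral_remainder hf.contDiffOn]
  refine integral_congr fun u hu => ?_
  simp only [iteratedDerivWithin_eq_iteratedDeriv hs hf.contDiffAt hu]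

end Taylor

theorem Polynomial.exists_degree_lt_eval_eq_taylorWithinEval (f : ℝ → ℝ) (n : ℕ) (s : Set ℝ) :
    ∃ q : ℝ[X], q.degree < ↑(n + 1) ∧ ∀ x, q.eval x = taylorWithinEval f n s 0 x := by
  refine ⟨∑ k : Fin (n + 1), C (taylorCoeffWithin f k s 0) * X ^ (k : ℕ),
    degree_sum_fin_lt _, fun x => ?_⟩
  simp only [eval_finsetSum, eval_mul, eval_C, eval_pow, eval_X, taylor_within_apply,
    taylorCoeffWithin, sub_zero, smul_eq_mul]
  rw [Fin.sum_univ_eq_sum_range (fun k => (k ! : ℝ)⁻¹ * iteratedDerivWithin k f s 0 * x ^ k)]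
  exact Finset.sum_congr rfl fun k _ => by ring

theorem abs_sub_taylorWithinEval_le_integral_abs {f : ℝ → ℝ} {n : ℕ}
    (hf : ContDiff ℝ (n + 1 : ℕ) f) {x : ℝ} (hx : x ∈ Icc (0 : ℝ) 1) :
    |f x - taylorWithinEval f n univ 0 x| ≤ ∫ u in (0 : ℝ)..1, |iteratedDeriv (n + 1) f u| := by
  obtain ⟨hx0, hx1⟩ := hx
  have hg : Continuous (iteratedDeriv (n + 1) f) := hf.continuous_iteratedDeriv _ le_rfl
  have hkernel : Continuous fun u : ℝ => (x - u) ^ n / n ! := by fun_prop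
  rw [taylor_integral_remainder_univ hf]
  calc |∫ u in (0 : ℝ)..x, ((x - u) ^ n / n !) • iteratedDeriv (n + 1) f u|
      ≤ ∫ u in (0 : ℝ)..x, |((x - u) ^ n / n !) • iteratedDeriv (n + 1) f u| :=
        abs_integral_le_integral_abs hx0
    _ ≤ ∫ u in (0 : ℝ)..x, |iteratedDeriv (n + 1) f u| := by
        refine integral_mono_on hx0 ((hkernel.smul hg).abs.intervalIntegrable _ _)
          (hg.abs.intervalIntegrable _ _) fun u hu => ?_
        have hxu : 0 ≤ x - u := by linarith [hu.2]
        rw [smul_eq_mul, abs_mul, abs_of_nonneg (by positivity)]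
        refine mul_le_of_le_one_left (abs_nonneg _) (div_le_one_of_le₀ ?_ (by positivity))
        calc (x - u) ^ n ≤ 1 := pow_le_one₀ hxu (by linarith [hu.1])
          _ ≤ n ! := Nat.one_le_cast.mpr n.factorial_pos
    _ ≤ ∫ u in (0 : ℝ)..1, |iteratedDeriv (n + 1) f u| :=
        integral_mono_interval le_rfl hx0 hx1 (.of_forall fun u => abs_nonneg _)
          (hg.abs.intervalIntegrable _ _)

/-- Cauchy–Schwarz against the constant `1`, via `0 ≤ ∫₀¹ (|g| - ∫₀¹ |g|)²`. -/
theorem sq_integral_abs_le_integral_sq {g : ℝ → ℝ} (hg : Continuous g) :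
    (∫ u in (0 : ℝ)..1, |g u|) ^ 2 ≤ ∫ u in (0 : ℝ)..1, g u ^ 2 := by
  set I := ∫ u in (0 : ℝ)..1, |g u|
  have hvar : ∫ u in (0 : ℝ)..1, (|g u| - I) ^ 2 = (∫ u in (0 : ℝ)..1, g u ^ 2) - I ^ 2 := by
    have hexpand : ∀ u, (|g u| - I) ^ 2 = g u ^ 2 - 2 * I * |g u| + I ^ 2 := fun u => by
      rw [sub_sq, sq_abs]; ring
    simp_rw [hexpand]
    have hsq : Continuous fun u => g u ^ 2 := hg.pow 2
    have hlin : Continuous fun u => 2 * I * |g u| := continuous_const.mul hg.abs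
    rw [integral_add (f := fun u => g u ^ 2 - 2 * I * |g u|)
        ((hsq.sub hlin).intervalIntegrable _ _) intervalIntegrable_const,
      integral_sub (hsq.intervalIntegrable _ _) (hlin.intervalIntegrable _ _),
      integral_const_mul, integral_const]
    simp only [smul_eq_mul]
    ring
  have hnonneg : 0 ≤ ∫ u in (0 : ℝ)..1, (|g u| - I) ^ 2 :=
    integral_nonneg zero_le_one fun u _ => sq_nonneg _
  linarith

theorem exists_degree_lt_sq_sub_eval_le_penInt {m : ℕ} (hm : 1 ≤ m) {β : ℝ → ℝ}
    (hβ : ContDiff ℝ m β) :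
    ∃ q : ℝ[X], q.degree < m ∧ ∀ x ∈ Icc (0 : ℝ) 1, (β x - q.eval x) ^ 2 ≤ penInt m β := by
  obtain ⟨n, rfl⟩ := Nat.exists_eq_add_of_le' hm
  obtain ⟨q, hq, hq_eval⟩ := exists_degree_lt_eval_eq_taylorWithinEval β n univ
  refine ⟨q, hq, fun x hx => ?_⟩
  rw [hq_eval, ← sq_abs]
  calc |β x - taylorWithinEval β n univ 0 x| ^ 2
      ≤ (∫ u in (0 : ℝ)..1, |iteratedDeriv (n + 1) β u|) ^ 2 :=
        pow_le_pow_left₀ (abs_nonneg _) (abs_sub_taylorWithinEval_le_integral_abs hβ hx) 2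
    _ ≤ penInt (n + 1) β :=
        sq_integral_abs_le_integral_sq (hβ.continuous_iteratedDeriv _ le_rfl)

theorem penInt_nonneg (m : ℕ) (f : ℝ → ℝ) : 0 ≤ penInt m f :=
  integral_nonneg zero_le_one fun _ _ => sq_nonneg _

noncomputable def discInner (p : ℕ) (t : Fin p → ℝ) (f g : ℝ → ℝ) : ℝ :=
  (1 / (p : ℝ)) * ∑ j, f (t j) * g (t j)

section Discrete

variable {p : ℕ} {t : Fin p → ℝ}

theorem discSq_nonneg (f : ℝ → ℝ) : 0 ≤ discSq p t f :=
  mul_nonneg (by positivity) (Finset.sum_nonneg fun _ _ => sq_nonneg _)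

theorem discSq_add (f g : ℝ → ℝ) :
    discSq p t (f + g) = discSq p t f + discSq p t g + 2 * discInner p t f g := by
  simp only [discSq, discInner, Pi.add_apply, add_sq, mul_assoc, Finset.sum_add_distrib,
    ← Finset.mul_sum]
  ring

theorem discSq_add_of_discInner_eq_zero {f g : ℝ → ℝ} (h : discInner p t f g = 0) :
    discSq p t (f + g) = discSq p t f + discSq p t g := by
  rw [discSq_add, h, mul_zero, add_zero]

theorem discSq_le_of_forall_sq_le {f : ℝ → ℝ} {C : ℝ} (hC : 0 ≤ C)
    (h : ∀ j, f (t j) ^ 2 ≤ C) : discSq p t f ≤ C := by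
  calc discSq p t f ≤ (1 / (p : ℝ)) * (p * C) := by
        refine mul_le_mul_of_nonneg_left ?_ (by positivity)
        simpa using Finset.sum_le_sum fun j (_ : j ∈ Finset.univ) => h j
    _ = (p / p : ℝ) * C := by ring
    _ ≤ C := mul_le_of_le_one_left hC (div_self_le_one _)

variable {m : ℕ} {β π : ℝ → ℝ}

theorem discSq_eq_add_discSq_sub (hπ : ∃ q : ℝ[X], q.degree < m ∧ ∀ x, π x = q.eval x)
    (horth : ∀ q : ℝ[X], q.degree < m → discInner p t (β - π) (fun x => q.eval x) = 0) :
    discSq p t β = discSq p t π + discSq p t (β - π) := by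
  obtain ⟨q, hq, hπq⟩ := hπ
  have hπ_eq : π = fun x => q.eval x := funext hπq
  rw [add_comm, ← discSq_add_of_discInner_eq_zero (hπ_eq ▸ horth q hq), sub_add_cancel]

theorem discSq_sub_le_discSq_sub_eval (hπ : ∃ q : ℝ[X], q.degree < m ∧ ∀ x, π x = q.eval x)
    (horth : ∀ q : ℝ[X], q.degree < m → discInner p t (β - π) (fun x => q.eval x) = 0)
    {q : ℝ[X]} (hq : q.degree < m) :
    discSq p t (β - π) ≤ discSq p t (fun x => β x - q.eval x) := by
  obtain ⟨r, hr, hπr⟩ := hπ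
  have hdecomp : (fun x => β x - q.eval x) = (β - π) + fun x => (r - q).eval x := by
    ext x; simp [hπr]
  have hrq : (r - q).degree < m := (degree_sub_le r q).trans_lt (max_lt hr hq)
  rw [hdecomp, discSq_add_of_discInner_eq_zero (horth _ hrq)]
  exact le_add_of_nonneg_right (discSq_nonneg _)

end Discrete

theorem stmt11_general (m : ℕ) (hm : 1 ≤ m) (p : ℕ)
    (t : Fin p → ℝ) (ht : ∀ j, t j ∈ Set.Ioo (0 : ℝ) 1)
    (P : (ℝ → ℝ) → (ℝ → ℝ))
    (hP_poly : ∀ β : ℝ → ℝ, ∃ q : Polynomial ℝ, q.degree < (m : ℕ) ∧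
      ∀ x, P β x = q.eval x)
    (hP_orth : ∀ (β : ℝ → ℝ) (q : Polynomial ℝ), q.degree < (m : ℕ) →
      (1 / (p : ℝ)) * ∑ j, (β (t j) - P β (t j)) * q.eval (t j) = 0) :
    ∃ c₁ c₂ : ℝ, 0 < c₁ ∧ c₁ ≤ c₂ ∧
      ∀ β : ℝ → ℝ, ContDiff ℝ m β →
        c₁ * Real.sqrt (discSq p t (P β) + penInt m β) ≤
            Real.sqrt (discSq p t β + penInt m β) ∧
          Real.sqrt (discSq p t β + penInt m β) ≤
            c₂ * Real.sqrt (discSq p t (P β) + penInt m β) := by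
  refine ⟨1, √2, one_pos, Real.one_lt_sqrt_two.le, fun β hβ => ?_⟩
  have hpyth := discSq_eq_add_discSq_sub (t := t) (hP_poly β) (hP_orth β)
  obtain ⟨q, hq, hq_approx⟩ := exists_degree_lt_sq_sub_eval_le_penInt hm hβ
  have hres : discSq p t (β - P β) ≤ penInt m β :=
    (discSq_sub_le_discSq_sub_eval (hP_poly β) (hP_orth β) hq).trans <|
      discSq_le_of_forall_sq_le (penInt_nonneg m β) fun j =>
        hq_approx _ (Ioo_subset_Icc_self (ht j))
  have hPβ := discSq_nonneg (t := t) (P β)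
  have hβP := discSq_nonneg (t := t) (β - P β)
  constructor
  · rw [one_mul]
    exact Real.sqrt_le_sqrt (by linarith)
  · calc √(discSq p t β + penInt m β) ≤ √(2 * (discSq p t (P β) + penInt m β)) :=
          Real.sqrt_le_sqrt (by linarith)
      _ = √2 * √(discSq p t (P β) + penInt m β) := Real.sqrt_mul zero_le_two _

/-- Equivalence of the penalty `J_m` of the paper and the penalty `J̃_m` of Crambes, Kneip and
Sarda: with `J²(β) = (1/p)Σ_j β(t_j)² + ∫_0^1 |β^{(m)}|²` and
`J̃²(β) = (1/p)Σ_j (Pβ)(t_j)² + ∫_0^1 |β^{(m)}|²`, where `P` is the orthogonal projection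
(with respect to the discrete inner product) onto polynomials of degree `< m` evaluated at the
points `{t_j}`, there exist constants `0 < c₁ ≤ c₂ < ∞`, not depending on `β`, such that
`c₁ J̃(β) ≤ J(β) ≤ c₂ J̃(β)` for all `β`. -/
theorem stmt11 (m : ℕ) (hm : 1 ≤ m) (p : ℕ) (hp : 0 < p)
    (t : Fin p → ℝ) (ht : ∀ j, t j ∈ Set.Ioo (0 : ℝ) 1) (htinj : Function.Injective t)
    (P : (ℝ → ℝ) → (ℝ → ℝ))
    (hP_poly : ∀ β : ℝ → ℝ, ∃ q : Polynomial ℝ, q.degree < (m : ℕ) ∧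
      ∀ x, P β x = q.eval x)
    (hP_orth : ∀ (β : ℝ → ℝ) (q : Polynomial ℝ), q.degree < (m : ℕ) →
      (1 / (p : ℝ)) * ∑ j, (β (t j) - P β (t j)) * q.eval (t j) = 0) :
    ∃ c₁ c₂ : ℝ, 0 < c₁ ∧ c₁ ≤ c₂ ∧
      ∀ β : ℝ → ℝ, ContDiff ℝ m β →
        c₁ * Real.sqrt (discSq p t (P β) + penInt m β) ≤
            Real.sqrt (discSq p t β + penInt m β) ∧
          Real.sqrt (discSq p t β + penInt m β) ≤
            c₂ * Real.sqrt (discSq p t (P β) + penInt m β) :=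
  stmt11_general m hm p t ht P hP_poly hP_orth
end
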